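/- arXiv:2005.02346 — 4 statements merged into one kernel-verified Lean document; each statement's English description precedes it below -/
import Mathlib

section
/- Let p be an odd prime, let G be a GGS-group acting on the p-adic tree, and let g be an element of the commutator subgroup G' (so g fixes all first-level vertices). Writing ψ(g) = (g_1,...,g_p), the product g_1 g_2 ⋯ g_p lies in G'. -/
open List

/-- The automorphism group of the `p`-adic rooted tree: vertices are finite words
over the alphabet `ZMod p` (the letter `i ∈ {1,…,p-1}` is `i` and the letter `p` is `0`),
and automorphisms are the permutations of the vertex set preserving word length and
the prefix relation. -/
def AutT (p : ℕ) : Subgroup (Equiv.Perm (List (ZMod p))) where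
  carrier := {σ | (∀ v, (σ v).length = v.length) ∧
      ∀ u v : List (ZMod p), u <+: v → σ u <+: σ v}
  one_mem' := ⟨fun _ => rfl, fun _ _ h => h⟩
  mul_mem' := by
    rintro σ τ ⟨hσ1, hσ2⟩ ⟨hτ1, hτ2⟩
    refine ⟨fun v => ?_, fun u v h => ?_⟩
    · simp only [Equiv.Perm.mul_apply, hσ1, hτ1]
    · simpa only [Equiv.Perm.mul_apply] using hσ2 _ _ (hτ2 _ _ h)
  inv_mem' := by
    rintro σ ⟨h1, h2⟩
    have hlen : ∀ v, (σ⁻¹ v).length = v.length := by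
      intro v
      have := h1 (σ⁻¹ v)
      rw [show ∀ x, σ (σ⁻¹ x) = x from Equiv.apply_symm_apply σ] at this
      exact this.symm
    refine ⟨hlen, fun u v huv => ?_⟩
    have hle : u.length ≤ (σ⁻¹ v).length := by
      rw [hlen]; exact huv.length_le
    have htake : (σ⁻¹ v).take u.length <+: σ⁻¹ v := List.take_prefix _ _
    have h3 : σ ((σ⁻¹ v).take u.length) <+: v := by
      have := h2 _ _ htake
      rwa [show ∀ x, σ (σ⁻¹ x) = x from Equiv.apply_symm_apply σ] at this
    have hlen2 : (σ ((σ⁻¹ v).take u.length)).length = u.length := by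
      rw [h1, List.length_take]
      omega
    have heq : σ ((σ⁻¹ v).take u.length) = u := by
      refine List.IsPrefix.eq_of_length ?_ (by rw [hlen2])
      exact List.prefix_of_prefix_length_le h3 huv (by rw [hlen2])
    have h4 : σ⁻¹ u = (σ⁻¹ v).take u.length := by
      conv_lhs => rw [← heq]
      exact Equiv.symm_apply_apply _ _
    rw [h4]; exact htake

lemma mem_AutT_iff {p : ℕ} {σ : Equiv.Perm (List (ZMod p))} :
    σ ∈ AutT p ↔ (∀ v, (σ v).length = v.length) ∧
      ∀ u v : List (ZMod p), u <+: v → σ u <+: σ v := Iff.rfl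

lemma autT_apply_append (p : ℕ) (f : Equiv.Perm (List (ZMod p))) (hf : f ∈ AutT p)
    (u v : List (ZMod p)) : f (u ++ v) = f u ++ (f (u ++ v)).drop u.length := by
  rw [mem_AutT_iff] at hf
  have hpre : f u <+: f (u ++ v) := hf.2 u (u ++ v) ⟨v, rfl⟩
  have := List.prefix_iff_eq_append.mp hpre
  rw [hf.1 u] at this
  exact this.symm

/-- The section (state) of a tree automorphism at the vertex `u`, as a permutation of
the subtree rooted at `u` (identified with the whole tree). -/
def secEquiv (p : ℕ) (f : ↥(AutT p)) (u : List (ZMod p)) : Equiv.Perm (List (ZMod p)) where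
  toFun v := ((f : Equiv.Perm (List (ZMod p))) (u ++ v)).drop u.length
  invFun v := (((f⁻¹ : ↥(AutT p)) : Equiv.Perm (List (ZMod p)))
      (((f : Equiv.Perm (List (ZMod p))) u) ++ v)).drop u.length
  left_inv v := by
    dsimp only
    have key := autT_apply_append p (f : Equiv.Perm (List (ZMod p))) f.2 u v
    rw [← key]
    have h1 : ((f⁻¹ : ↥(AutT p)) : Equiv.Perm (List (ZMod p)))
        ((f : Equiv.Perm (List (ZMod p))) (u ++ v)) = u ++ v := by
      rw [InvMemClass.coe_inv]
      exact Equiv.symm_apply_apply _ _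
    rw [h1, List.drop_left]
  right_inv v := by
    dsimp only
    have hg := (f⁻¹ : ↥(AutT p)).2
    rw [mem_AutT_iff] at hg
    have h1 : ((f⁻¹ : ↥(AutT p)) : Equiv.Perm (List (ZMod p)))
        ((f : Equiv.Perm (List (ZMod p))) u) = u := by
      rw [InvMemClass.coe_inv]
      exact Equiv.symm_apply_apply _ _
    have hpre : u <+: ((f⁻¹ : ↥(AutT p)) : Equiv.Perm (List (ZMod p)))
        (((f : Equiv.Perm (List (ZMod p))) u) ++ v) := by
      have := hg.2 ((f : Equiv.Perm (List (ZMod p))) u)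
        (((f : Equiv.Perm (List (ZMod p))) u) ++ v) ⟨v, rfl⟩
      rwa [h1] at this
    have hw := List.prefix_iff_eq_append.mp hpre
    rw [hw]
    have h2 : (f : Equiv.Perm (List (ZMod p)))
        (((f⁻¹ : ↥(AutT p)) : Equiv.Perm (List (ZMod p)))
          (((f : Equiv.Perm (List (ZMod p))) u) ++ v))
        = ((f : Equiv.Perm (List (ZMod p))) u) ++ v := by
      rw [InvMemClass.coe_inv]
      exact Equiv.apply_symm_apply _ _
    rw [h2]
    have hlu : ((f : Equiv.Perm (List (ZMod p))) u).length = u.length :=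
      ((mem_AutT_iff).mp f.2).1 u
    rw [← hlu, List.drop_left]

lemma secEquiv_mem (p : ℕ) (f : ↥(AutT p)) (u : List (ZMod p)) :
    secEquiv p f u ∈ AutT p := by
  rw [mem_AutT_iff]
  obtain ⟨h1, h2⟩ := (mem_AutT_iff).mp f.2
  constructor
  · intro v
    show (((f : Equiv.Perm (List (ZMod p))) (u ++ v)).drop u.length).length = v.length
    rw [List.length_drop, h1, List.length_append]
    omega
  · intro v w hvw
    show ((f : Equiv.Perm (List (ZMod p))) (u ++ v)).drop u.length <+:
      ((f : Equiv.Perm (List (ZMod p))) (u ++ w)).drop u.length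
    have hp : (f : Equiv.Perm (List (ZMod p))) (u ++ v) <+:
        (f : Equiv.Perm (List (ZMod p))) (u ++ w) := by
      apply h2
      obtain ⟨t, rfl⟩ := hvw
      exact ⟨t, by rw [List.append_assoc]⟩
    obtain ⟨t, ht⟩ := hp
    have hle : u.length ≤ ((f : Equiv.Perm (List (ZMod p))) (u ++ v)).length := by
      rw [h1, List.length_append]; omega
    exact ⟨t, by rw [← List.drop_append_of_le_length hle, ht]⟩

/-- `sectionAt p f u = φ_u(f)`, the section of `f` at vertex `u`, as a tree automorphism. -/
def sectionAt (p : ℕ) (f : ↥(AutT p)) (u : List (ZMod p)) : ↥(AutT p) :=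
  ⟨secEquiv p f u, secEquiv_mem p f u⟩

/-- Add `k` to the first letter of a word (identity on the empty word). -/
def addFirst (p : ℕ) (k : ZMod p) : List (ZMod p) → List (ZMod p)
  | [] => []
  | x :: v => (x + k) :: v

lemma addFirst_addFirst (p : ℕ) (k l : ZMod p) (v : List (ZMod p)) :
    addFirst p k (addFirst p l v) = addFirst p (l + k) v := by
  cases v with
  | nil => rfl
  | cons x w => show (x + l + k) :: w = (x + (l + k)) :: w; rw [add_assoc]

lemma addFirst_zero (p : ℕ) (v : List (ZMod p)) : addFirst p 0 v = v := by
  cases v with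
  | nil => rfl
  | cons x w => show (x + 0) :: w = x :: w; rw [add_zero]

lemma addFirst_length (p : ℕ) (k : ZMod p) (v : List (ZMod p)) :
    (addFirst p k v).length = v.length := by
  cases v <;> rfl

/-- The rooted automorphism corresponding to the `p`-cycle `(1 2 ⋯ p)`:
it adds `1` to the first letter of every nonempty word. -/
def aPerm (p : ℕ) : Equiv.Perm (List (ZMod p)) where
  toFun := addFirst p 1
  invFun := addFirst p (-1)
  left_inv v := by rw [addFirst_addFirst, add_neg_cancel, addFirst_zero]
  right_inv v := by rw [addFirst_addFirst, neg_add_cancel, addFirst_zero]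

lemma addFirst_prefix (p : ℕ) (k : ZMod p) (u t : List (ZMod p)) :
    addFirst p k u <+: addFirst p k (u ++ t) := by
  cases u with
  | nil => exact List.nil_prefix
  | cons x w => exact ⟨t, rfl⟩

lemma aPerm_mem (p : ℕ) : aPerm p ∈ AutT p := by
  rw [mem_AutT_iff]
  refine ⟨fun v => addFirst_length p 1 v, ?_⟩
  rintro u v ⟨t, rfl⟩
  exact addFirst_prefix p 1 u t

/-- The rooted generator `a` of a GGS-group. -/
def aA (p : ℕ) : ↥(AutT p) := ⟨aPerm p, aPerm_mem p⟩

/-- The underlying function of the directed automorphism `b` with defining vector `e`. -/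
def bFun (p : ℕ) [NeZero p] (e : Fin (p - 1) → ZMod p) : List (ZMod p) → List (ZMod p)
  | [] => []
  | x :: v =>
    if h : x.val = 0 then x :: bFun p e v
    else x :: addFirst p (e ⟨x.val - 1, by have := ZMod.val_lt x; omega⟩) v

lemma bFun_cons (p : ℕ) [NeZero p] (e : Fin (p - 1) → ZMod p) (x : ZMod p)
    (v : List (ZMod p)) :
    bFun p e (x :: v) = if h : x.val = 0 then x :: bFun p e v
      else x :: addFirst p (e ⟨x.val - 1, by have := ZMod.val_lt x; omega⟩) v := rfl

lemma bFun_bFun (p : ℕ) [NeZero p] (e f : Fin (p - 1) → ZMod p)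
    (h : ∀ j, e j + f j = 0) (v : List (ZMod p)) : bFun p f (bFun p e v) = v := by
  induction v with
  | nil => rfl
  | cons x w ih =>
    by_cases hx : x.val = 0
    · rw [bFun_cons, dif_pos hx, bFun_cons, dif_pos hx, ih]
    · rw [bFun_cons, dif_neg hx, bFun_cons, dif_neg hx, addFirst_addFirst, h, addFirst_zero]

/-- The directed automorphism `b` with defining vector `e`, as a permutation:
`ψ(b) = (a^{e_1}, …, a^{e_{p-1}}, b)`. -/
def bPerm (p : ℕ) [NeZero p] (e : Fin (p - 1) → ZMod p) : Equiv.Perm (List (ZMod p)) where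
  toFun := bFun p e
  invFun := bFun p (fun j => -e j)
  left_inv v := bFun_bFun p e _ (fun j => add_neg_cancel _) v
  right_inv v := bFun_bFun p _ e (fun j => neg_add_cancel _) v

lemma bFun_length (p : ℕ) [NeZero p] (e : Fin (p - 1) → ZMod p) (v : List (ZMod p)) :
    (bFun p e v).length = v.length := by
  induction v with
  | nil => rfl
  | cons x w ih =>
    by_cases hx : x.val = 0
    · rw [bFun_cons, dif_pos hx]; simpa using ih
    · rw [bFun_cons, dif_neg hx]; simp [addFirst_length]

lemma bPerm_mem (p : ℕ) [NeZero p] (e : Fin (p - 1) → ZMod p) : bPerm p e ∈ AutT p := by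
  rw [mem_AutT_iff]
  refine ⟨fun v => bFun_length p e v, ?_⟩
  rintro u v ⟨t, rfl⟩
  show bFun p e u <+: bFun p e (u ++ t)
  induction u with
  | nil => exact List.nil_prefix
  | cons x w ih =>
    by_cases hx : x.val = 0
    · rw [List.cons_append, bFun_cons, dif_pos hx, bFun_cons, dif_pos hx]
      exact List.cons_prefix_cons.mpr ⟨rfl, ih⟩
    · rw [List.cons_append, bFun_cons, dif_neg hx, bFun_cons, dif_neg hx]
      exact List.cons_prefix_cons.mpr ⟨rfl, addFirst_prefix p _ w t⟩

/-- The directed generator `b` of the GGS-group with defining vector `e`. -/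
def bA (p : ℕ) [NeZero p] (e : Fin (p - 1) → ZMod p) : ↥(AutT p) :=
  ⟨bPerm p e, bPerm_mem p e⟩

/-- The GGS-group `G = ⟨a, b⟩ ≤ Aut T` with defining vector `e`. -/
def GGS (p : ℕ) [NeZero p] (e : Fin (p - 1) → ZMod p) : Subgroup ↥(AutT p) :=
  Subgroup.closure {aA p, bA p e}

lemma aA_mem_GGS (p : ℕ) [NeZero p] (e : Fin (p - 1) → ZMod p) : aA p ∈ GGS p e :=
  Subgroup.subset_closure (Set.mem_insert _ _)

lemma bA_mem_GGS (p : ℕ) [NeZero p] (e : Fin (p - 1) → ZMod p) : bA p e ∈ GGS p e :=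
  Subgroup.subset_closure (Set.mem_insert_of_mem _ rfl)

/-- `a^n` for an exponent `n ∈ F_p`. -/
def aZ (p : ℕ) (n : ZMod p) : ↥(AutT p) := aA p ^ n.val

/-- `b^m` for an exponent `m ∈ F_p`. -/
def bZ (p : ℕ) [NeZero p] (e : Fin (p - 1) → ZMod p) (m : ZMod p) : ↥(AutT p) :=
  bA p e ^ m.val

/-- The length `|g|` of an element of the GGS-group with defining vector `e`:
the minimal number `m` of `b`-syllables in an expression
`g = a^{α_1} b^{β_1} a^{α_2} ⋯ b^{β_m} a^{α_{m+1}}`. -/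
noncomputable def glen (p : ℕ) [NeZero p] (e : Fin (p - 1) → ZMod p) (g : ↥(AutT p)) : ℕ :=
  sInf {m : ℕ | ∃ (α : Fin (m + 1) → ZMod p) (β : Fin m → ZMod p),
    g = aZ p (α 0) * (List.ofFn fun i : Fin m => bZ p e (β i) * aZ p (α i.succ)).prod}

/-- An element of `Aut T` fixes all first-level vertices, i.e. lies in `st(1)`. -/
def FixesLevelOne (p : ℕ) (f : ↥(AutT p)) : Prop :=
  ∀ x : ZMod p, (f : Equiv.Perm (List (ZMod p))) [x] = [x]

/-! Let `S = ψ⁻¹(G × ⋯ × G)`. Sending `g ∈ S` to the product of its first-level sections in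
`G/G'` is a homomorphism `Φ` on `S`, because `G/G'` is abelian, and conjugation by `a` only
permutes the sections cyclically, so it does not change `Φ`. Since `b ∈ S`, every element of `G`
has the form `a^k s` with `s ∈ S`; hence a commutator of two elements of `G` is a product of four
elements of `S` whose images under `Φ` cancel. Thus `Φ` kills `G'`, which is the claim. -/

section Sections

variable {p : ℕ}

lemma autT_ext {f g : ↥(AutT p)}
    (h : ∀ v, (f : Equiv.Perm (List (ZMod p))) v = (g : Equiv.Perm (List (ZMod p))) v) :
    f = g :=
  Subtype.ext (Equiv.ext h)

lemma sectionAt_singleton_apply (f : ↥(AutT p)) (x : ZMod p) (v : List (ZMod p)) :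
    ((sectionAt p f [x] : ↥(AutT p)) : Equiv.Perm (List (ZMod p))) v
      = ((f : Equiv.Perm (List (ZMod p))) (x :: v)).drop 1 :=
  rfl

lemma apply_cons_of_apply_singleton {g : ↥(AutT p)} {x : ZMod p}
    (hx : (g : Equiv.Perm (List (ZMod p))) [x] = [x]) (v : List (ZMod p)) :
    (g : Equiv.Perm (List (ZMod p))) (x :: v)
      = x :: ((sectionAt p g [x] : ↥(AutT p)) : Equiv.Perm (List (ZMod p))) v := by
  have h := autT_apply_append p _ g.2 [x] v
  rwa [hx] at h

lemma sectionAt_one (u : List (ZMod p)) : sectionAt p 1 u = 1 :=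
  autT_ext fun v => by
    show ((1 : Equiv.Perm (List (ZMod p))) (u ++ v)).drop u.length = v
    simp

lemma sectionAt_mul (f : ↥(AutT p)) {g : ↥(AutT p)} {x : ZMod p}
    (hx : (g : Equiv.Perm (List (ZMod p))) [x] = [x]) :
    sectionAt p (f * g) [x] = sectionAt p f [x] * sectionAt p g [x] :=
  autT_ext fun v => by
    rw [sectionAt_singleton_apply, MulMemClass.coe_mul, Equiv.Perm.mul_apply,
      apply_cons_of_apply_singleton hx]
    rfl

lemma sectionAt_inv {g : ↥(AutT p)} {x : ZMod p}
    (hx : (g : Equiv.Perm (List (ZMod p))) [x] = [x]) :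
    sectionAt p g⁻¹ [x] = (sectionAt p g [x])⁻¹ := by
  rw [eq_inv_iff_mul_eq_one, ← sectionAt_mul g⁻¹ hx, inv_mul_cancel, sectionAt_one]

end Sections

section LevelOne

variable (p : ℕ) (H : Subgroup ↥(AutT p))

/-- `st1Within p H = ψ⁻¹(H × ⋯ × H)`. -/
def st1Within : Subgroup ↥(AutT p) where
  carrier := {g | FixesLevelOne p g ∧ ∀ x : ZMod p, sectionAt p g [x] ∈ H}
  one_mem' := ⟨fun _ => rfl, fun x => by rw [sectionAt_one]; exact one_mem H⟩
  mul_mem' := by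
    rintro f g ⟨hf, hfH⟩ ⟨hg, hgH⟩
    refine ⟨fun x => ?_, fun x => ?_⟩
    · simp only [MulMemClass.coe_mul, Equiv.Perm.mul_apply, hg x, hf x]
    · rw [sectionAt_mul f (hg x)]
      exact mul_mem (hfH x) (hgH x)
  inv_mem' := by
    rintro g ⟨hg, hgH⟩
    have hg' : ∀ x, ((g⁻¹ : ↥(AutT p)) : Equiv.Perm (List (ZMod p))) [x] = [x] := fun x => by
      rw [InvMemClass.coe_inv, Equiv.Perm.inv_eq_iff_eq, hg x]
    refine ⟨hg', fun x => ?_⟩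
    rw [sectionAt_inv (hg x)]
    exact inv_mem (hgH x)

def firstSection (x : ZMod p) : st1Within p H →* H where
  toFun g := ⟨sectionAt p g [x], g.2.2 x⟩
  map_one' := Subtype.ext (sectionAt_one _)
  map_mul' f g := Subtype.ext (sectionAt_mul (f : ↥(AutT p)) (g.2.1 x))

def sectionProd [NeZero p] : st1Within p H →* Abelianization H :=
  ∏ x : ZMod p, Abelianization.of.comp (firstSection p H x)

lemma sectionProd_apply [NeZero p] (g : st1Within p H) :
    sectionProd p H g = ∏ x : ZMod p, Abelianization.of (firstSection p H x g) :=
  MonoidHom.finsetProd_apply _ _ g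

end LevelOne

section RootedConjugation

variable {p : ℕ}

lemma aA_zpow_apply (k : ℤ) (v : List (ZMod p)) :
    ((aA p ^ k : ↥(AutT p)) : Equiv.Perm (List (ZMod p))) v = addFirst p k v := by
  induction k using Int.induction_on with
  | zero => simp [addFirst_zero]
  | succ k ih =>
    rw [add_comm, zpow_one_add, MulMemClass.coe_mul, Equiv.Perm.mul_apply, ih]
    show addFirst p 1 (addFirst p _ v) = _
    rw [addFirst_addFirst]
    congr 1
    push_cast
    ring
  | pred k ih =>
    rw [sub_eq_neg_add, zpow_add, zpow_neg_one, MulMemClass.coe_mul, Equiv.Perm.mul_apply, ih,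
      InvMemClass.coe_inv]
    show addFirst p (-1) (addFirst p _ v) = _
    rw [addFirst_addFirst]
    congr 1
    push_cast
    ring

lemma conj_aA_zpow_apply_cons (k : ℤ) {g : ↥(AutT p)} {x : ZMod p}
    (hx : (g : Equiv.Perm (List (ZMod p))) [x + k] = [x + k]) (v : List (ZMod p)) :
    (((aA p ^ k)⁻¹ * g * aA p ^ k : ↥(AutT p)) : Equiv.Perm (List (ZMod p))) (x :: v)
      = x :: ((sectionAt p g [x + k] : ↥(AutT p)) : Equiv.Perm (List (ZMod p))) v := by
  rw [← zpow_neg, MulMemClass.coe_mul, MulMemClass.coe_mul, Equiv.Perm.mul_apply,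
    Equiv.Perm.mul_apply, aA_zpow_apply, aA_zpow_apply]
  show addFirst p ((-k : ℤ) : ZMod p) ((g : Equiv.Perm (List (ZMod p))) ((x + k) :: v)) = _
  rw [apply_cons_of_apply_singleton hx]
  show (x + k + ((-k : ℤ) : ZMod p)) :: _ = _
  push_cast
  rw [add_neg_cancel_right]

variable (H : Subgroup ↥(AutT p))

lemma sectionAt_conj_aA_zpow (k : ℤ) {g : ↥(AutT p)} (hg : FixesLevelOne p g) (x : ZMod p) :
    sectionAt p ((aA p ^ k)⁻¹ * g * aA p ^ k) [x] = sectionAt p g [x + k] :=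
  autT_ext fun v => by
    rw [sectionAt_singleton_apply, conj_aA_zpow_apply_cons k (hg _)]
    rfl

lemma conj_aA_zpow_mem_st1Within (k : ℤ) {g : ↥(AutT p)} (hg : g ∈ st1Within p H) :
    (aA p ^ k)⁻¹ * g * aA p ^ k ∈ st1Within p H := by
  refine ⟨fun x => ?_, fun x => ?_⟩
  · rw [conj_aA_zpow_apply_cons k (hg.1 _), sectionAt_singleton_apply, hg.1]
    rfl
  · rw [sectionAt_conj_aA_zpow k hg.1]
    exact hg.2 _

def conjAZpow (k : ℤ) : st1Within p H →* st1Within p H where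
  toFun g := ⟨(aA p ^ k)⁻¹ * g * aA p ^ k, conj_aA_zpow_mem_st1Within H k g.2⟩
  map_one' := Subtype.ext (by simp)
  map_mul' f g := Subtype.ext (by simp only [Subgroup.coe_mul]; group)

lemma coe_conjAZpow (k : ℤ) (g : st1Within p H) :
    (conjAZpow H k g : ↥(AutT p)) = (aA p ^ k)⁻¹ * g * aA p ^ k :=
  rfl

lemma sectionProd_conjAZpow [NeZero p] (k : ℤ) (g : st1Within p H) :
    sectionProd p H (conjAZpow H k g) = sectionProd p H g := by
  rw [sectionProd_apply, sectionProd_apply]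
  exact Fintype.prod_equiv (Equiv.addRight (k : ZMod p)) _ _ fun x =>
    congrArg _ (Subtype.ext (sectionAt_conj_aA_zpow k g.2.1 x))

end RootedConjugation

section Commutator

variable (p : ℕ) [NeZero p] (H : Subgroup ↥(AutT p))

def zpowersAMulSt1Within : Subgroup ↥(AutT p) where
  carrier := {x | ∃ (k : ℤ) (s : st1Within p H), x = aA p ^ k * s}
  one_mem' := ⟨0, 1, by simp⟩
  mul_mem' := by
    rintro _ _ ⟨k, s, rfl⟩ ⟨l, t, rfl⟩
    refine ⟨k + l, conjAZpow H l s * t, ?_⟩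
    simp only [Subgroup.coe_mul, coe_conjAZpow]
    group
  inv_mem' := by
    rintro _ ⟨k, s, rfl⟩
    refine ⟨-k, conjAZpow H (-k) s⁻¹, ?_⟩
    simp only [coe_conjAZpow, InvMemClass.coe_inv]
    group

lemma commutator_zpowersAMulSt1Within_le :
    ⁅zpowersAMulSt1Within p H, zpowersAMulSt1Within p H⁆
      ≤ (sectionProd p H).ker.map (st1Within p H).subtype := by
  rw [Subgroup.commutator_le]
  intro x hx y hy
  obtain ⟨k, s, hs⟩ := inv_mem hx
  obtain ⟨l, t, ht⟩ := inv_mem hy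
  -- `⁅x, y⁆ = s⁻¹ (a^{-k} t a^k)⁻¹ (a^{-l} s a^l) t` when `x⁻¹ = a^k s` and `y⁻¹ = a^l t`
  refine ⟨s⁻¹ * (conjAZpow H k t)⁻¹ * conjAZpow H l s * t, ?_, ?_⟩
  · rw [SetLike.mem_coe, MonoidHom.mem_ker, map_mul, map_mul, map_mul, map_inv, map_inv,
      sectionProd_conjAZpow, sectionProd_conjAZpow]
    simp
  · rw [← inv_inv x, ← inv_inv y, hs, ht]
    simp only [Subgroup.coe_subtype, Subgroup.coe_mul, InvMemClass.coe_inv, coe_conjAZpow,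
      commutatorElement_def]
    group

end Commutator

lemma Subgroup.coe_mem_commutator_of_abelianization_of_eq_one {G : Type*} [Group G]
    {H : Subgroup G} {x : H} (hx : Abelianization.of x = 1) : (x : G) ∈ ⁅H, H⁆ := by
  rw [← H.map_subtype_commutator, ← Abelianization.ker_of]
  exact Subgroup.mem_map_of_mem _ hx

lemma prod_sectionAt_mem_commutator {p : ℕ} [NeZero p] {H : Subgroup ↥(AutT p)}
    {g : st1Within p H} (hg : sectionProd p H g = 1) :
    (List.ofFn fun i : Fin p => sectionAt p g [((i : ℕ) + 1 : ZMod p)]).prod ∈ ⁅H, H⁆ := by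
  have hbij : Function.Bijective fun i : Fin p => ((i : ℕ) : ZMod p) + 1 := by
    refine (Equiv.addRight (1 : ZMod p)).bijective.comp
      ((Fintype.bijective_iff_injective_and_card _).mpr ⟨fun i j hij => ?_, by simp⟩)
    rw [Fin.ext_iff, ← ZMod.val_cast_of_lt i.isLt, ← ZMod.val_cast_of_lt j.isLt]
    exact congrArg ZMod.val hij
  have hprod : (List.ofFn fun i : Fin p => sectionAt p g [((i : ℕ) + 1 : ZMod p)]).prod
      = H.subtype
          (List.ofFn fun i : Fin p => firstSection p H (((i : ℕ) : ZMod p) + 1) g).prod := by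
    rw [map_list_prod, List.map_ofFn]
    rfl
  rw [hprod]
  apply Subgroup.coe_mem_commutator_of_abelianization_of_eq_one
  rw [map_list_prod, List.map_ofFn, List.prod_ofFn, ← hg, sectionProd_apply]
  exact Fintype.prod_bijective _ hbij _ _ fun _ => rfl

section GGS

variable (p : ℕ) [NeZero p] (e : Fin (p - 1) → ZMod p)

lemma sectionAt_bA_mem_GGS (x : ZMod p) : sectionAt p (bA p e) [x] ∈ GGS p e := by
  by_cases hx : x.val = 0
  · have hsec : sectionAt p (bA p e) [x] = bA p e := autT_ext fun v => by
      show (bFun p e (x :: v)).drop 1 = bFun p e v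
      rw [bFun_cons, dif_pos hx, List.drop_one, List.tail_cons]
    rw [hsec]
    exact bA_mem_GGS p e
  · have hlt : x.val - 1 < p - 1 := by have := ZMod.val_lt x; omega
    have hsec : sectionAt p (bA p e) [x] = aA p ^ ((e ⟨x.val - 1, hlt⟩).val : ℤ) :=
      autT_ext fun v => by
        rw [aA_zpow_apply, Int.cast_natCast, ZMod.natCast_zmod_val]
        show (bFun p e (x :: v)).drop 1 = _
        rw [bFun_cons, dif_neg hx, List.drop_one, List.tail_cons]
    rw [hsec]
    exact zpow_mem (aA_mem_GGS p e) _

lemma bA_mem_st1Within : bA p e ∈ st1Within p (GGS p e) := by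
  refine ⟨fun x => ?_, sectionAt_bA_mem_GGS p e⟩
  show bFun p e [x] = [x]
  rw [bFun_cons]
  split_ifs <;> rfl

lemma GGS_le_zpowersAMulSt1Within : GGS p e ≤ zpowersAMulSt1Within p (GGS p e) := by
  rw [GGS, Subgroup.closure_le]
  rintro _ (rfl | rfl)
  · exact ⟨1, 1, by simp⟩
  · exact ⟨0, ⟨bA p e, bA_mem_st1Within p e⟩, by simp⟩

end GGS

theorem ggs_sections_prod_mem_commutator_general
    (p : ℕ) [Fact p.Prime]
    (e : Fin (p - 1) → ZMod p)
    (g : ↥(AutT p)) (hg : g ∈ ⁅GGS p e, GGS p e⁆) :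
    (List.ofFn fun i : Fin p =>
        sectionAt p g [((i : ℕ) + 1 : ZMod p)]).prod ∈ ⁅GGS p e, GGS p e⁆ := by
  have hle := GGS_le_zpowersAMulSt1Within p e
  obtain ⟨s, hs, rfl⟩ :=
    commutator_zpowersAMulSt1Within_le p (GGS p e) (Subgroup.commutator_mono hle hle hg)
  exact prod_sectionAt_mem_commutator hs

/-- **Lemma 3.1.** For `G` a GGS-group, let `g ∈ G'` and write `ψ(g) = (g_1, …, g_p)`.
Then `g_1 g_2 ⋯ g_p ∈ G'`. (The section at the first-level vertex `i ∈ {1,…,p}` is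
`sectionAt p g [(i : ZMod p)]`, the letter `p` being `0` in `ZMod p`.) -/
theorem ggs_sections_prod_mem_commutator
    (p : ℕ) [Fact p.Prime] (hodd : Odd p)
    (e : Fin (p - 1) → ZMod p) (he : e ≠ 0)
    (g : ↥(AutT p)) (hg : g ∈ ⁅GGS p e, GGS p e⁆) :
    (List.ofFn fun i : Fin p =>
        sectionAt p g [((i : ℕ) + 1 : ZMod p)]).prod ∈ ⁅GGS p e, GGS p e⁆ :=
  ggs_sections_prod_mem_commutator_general p e g hg
end

section
/- If a group G has a nilpotent subgroup of finite index, then every maximal subgroup of G has finite index in G. -/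
/-!
Replace the nilpotent subgroup of finite index by its normal core `K`. As `K` satisfies the
normalizer condition and `M` is maximal, `K ⊓ M` is normal in `G`, and in `G ⧸ K ⊓ M` the image
`A` of `K` is a minimal normal subgroup (or trivial). Being nilpotent, `A` is abelian. Being
abelian of finite index, it gives each of its elements a centralizer of finite index, hence
finitely many conjugates; so `A`, the normal closure of any nontrivial element, is finitely
generated. Its squares form a normal subgroup, so `A` either has exponent two or is
`2`-divisible, and in the latter case Nakayama's lemma makes it torsion. Thus `A` is finite, and
`K ⊓ M ≤ M` has finite index.
-/

open Subgroup

theorem CommGroup.isMulTorsion_of_surjective_pow {A : Type*} [CommGroup A] [Group.FG A] {n : ℕ}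
    (hn : n ≠ 1) (hsurj : Function.Surjective fun x : A => x ^ n) : IsMulTorsion A := by
  have : Module.Finite ℤ (Additive A) := Module.Finite.iff_addGroup_fg.mpr inferInstance
  -- Nakayama for the ideal `nℤ` yields `r ≡ 1 [ZMOD n]` annihilating `A`.
  obtain ⟨r, hr1, hr⟩ := Submodule.exists_sub_one_mem_and_smul_eq_zero_of_fg_of_le_smul
    (Ideal.span {(n : ℤ)}) ⊤ Module.Finite.fg_top fun x _ => by
      obtain ⟨y, hy⟩ := hsurj (Additive.toMul x)
      have hx : x = (n : ℤ) • Additive.ofMul y := by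
        rw [natCast_zsmul, ← ofMul_pow, show y ^ n = _ from hy, ofMul_toMul]
      rw [hx]
      exact Submodule.smul_mem_smul (Ideal.mem_span_singleton_self _) trivial
  have hr0 : r ≠ 0 := by
    rintro rfl
    rw [Ideal.mem_span_singleton, zero_sub, dvd_neg, Int.natCast_dvd_ofNat, Nat.dvd_one] at hr1
    exact hn hr1
  exact fun x => isOfFinOrder_iff_zpow_eq_one.mpr ⟨r, hr0, hr (Additive.ofMul x) trivial⟩

theorem Group.finite_conjugatesOf {Q : Type*} [Group Q] (a : Q) [(centralizer {a}).FiniteIndex] :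
    (conjugatesOf a).Finite := by
  have horbit : conjugatesOf a = MulAction.orbit (ConjAct Q) a := by
    ext b
    rw [ConjAct.mem_orbit_conjAct, isConj_comm]
    rfl
  have hindex : (MulAction.stabilizer (ConjAct Q) a).index ≠ 0 := by
    rw [← (MulAction.stabilizer (ConjAct Q) a).index_comap_of_surjective
      (f := ConjAct.toConjAct.toMonoidHom) ConjAct.toConjAct.surjective]
    exact centralizer_eq_comap_stabilizer a ▸ FiniteIndex.index_ne_zero
  rw [horbit]
  exact Set.finite_of_ncard_ne_zero (MulAction.index_stabilizer (ConjAct Q) a ▸ hindex)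

namespace Subgroup

variable {Q : Type*} [Group Q]

theorem fg_normalClosure_singleton (a : Q) [(centralizer {a}).FiniteIndex] :
    (normalClosure {a}).FG :=
  ⟨(Group.finite_conjugatesOf a).toFinset, by simp [normalClosure, Group.conjugatesOfSet]⟩

open scoped IsMulCommutative in
theorem normal_map_range_powMonoidHom (A : Subgroup Q) [A.Normal] [IsMulCommutative A] (n : ℕ) :
    ((powMonoidHom n : A →* A).range.map A.subtype).Normal := by
  constructor
  rintro _ ⟨_, ⟨x, rfl⟩, rfl⟩ g
  refine ⟨_, ⟨⟨g * x * g⁻¹, Normal.conj_mem inferInstance _ x.2 g⟩, rfl⟩, ?_⟩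
  simp [conj_pow]

theorem isMulCommutative_of_minimal_normal {A : Subgroup Q} [A.Normal] [Group.IsSolvable A]
    (hA : ∀ N : Subgroup Q, N.Normal → N ≤ A → N = ⊥ ∨ N = A) : IsMulCommutative A := by
  rcases subsingleton_or_nontrivial A with _ | _
  · exact isMulCommutative_iff.mpr fun _ _ => Subsingleton.elim _ _
  rw [← commutator_self_eq_bot_iff]
  refine (hA _ inferInstance (commutator_le_self A)).resolve_right fun h => ?_
  have : Group.IsPerfect A := isPerfect_iff.mpr h
  exact Group.IsPerfect.not_isSolvable A inferInstance

open scoped IsMulCommutative in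
theorem finite_of_minimal_normal_of_isMulCommutative {A : Subgroup Q} [A.Normal] [A.FiniteIndex]
    [IsMulCommutative A] (hA : ∀ N : Subgroup Q, N.Normal → N ≤ A → N = ⊥ ∨ N = A) :
    Finite A := by
  obtain rfl | ⟨a, haA, ha⟩ := A.bot_or_exists_ne_one
  · infer_instance
  have : (centralizer {a}).FiniteIndex :=
    finiteIndex_of_le fun x hx => mem_centralizer_singleton_iff.mpr <|
      congrArg Subtype.val (mul_comm (⟨x, hx⟩ : A) ⟨a, haA⟩)
  have hclosure : normalClosure {a} = A :=
    (hA _ inferInstance (normalClosure_le_normal (Set.singleton_subset_iff.mpr haA))).resolve_left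
      fun h => ha (by simpa [h] using subset_normalClosure (Set.mem_singleton a))
  have : Group.FG A := (Group.fg_iff_subgroup_fg A).mpr (hclosure ▸ fg_normalClosure_singleton a)
  have hsquares : (powMonoidHom 2 : A →* A).range = ⊥ ∨ (powMonoidHom 2 : A →* A).range = ⊤ := by
    rcases hA _ (normal_map_range_powMonoidHom A 2) (map_subtype_le _) with h | h
    · exact .inl ((map_eq_bot_iff_of_injective _ A.subtype_injective).mp h)
    · refine .inr (map_subtype_inj.mp ?_)
      rw [h, ← MonoidHom.range_eq_map, range_subtype]
  refine CommGroup.finite_of_fg_isMulTorsion _ ?_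
  rcases hsquares with h | h
  · exact fun x => isOfFinOrder_iff_pow_eq_one.mpr ⟨2, two_pos, by simpa using h.le ⟨x, rfl⟩⟩
  · exact CommGroup.isMulTorsion_of_surjective_pow (by norm_num) (MonoidHom.range_eq_top.mp h)

theorem normal_inf_of_isCoatom {K M : Subgroup Q} [K.Normal] (hK : NormalizerCondition K)
    (hM : IsCoatom M) : (K ⊓ M).Normal := by
  by_cases hKM : K ≤ M
  · rw [inf_eq_left.mpr hKM]
    infer_instance
  rw [← normalizer_eq_top_iff]
  have hMle : M ≤ normalizer (K ⊓ M : Subgroup Q) :=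
    (le_inf le_normalizer_of_normal le_normalizer).trans inf_normalizer_le_normalizer_inf
  refine (hM.le_iff.mp hMle).resolve_right fun hN => ?_
  have hlt : (K ⊓ M).subgroupOf K < ⊤ := by
    rwa [lt_top_iff_ne_top, Ne, inf_subgroupOf_left, subgroupOf_eq_top]
  have := hK _ hlt
  rw [← subgroupOf_normalizer_eq inf_le_left, hN, inf_subgroupOf_left] at this
  exact this.false

theorem le_or_le_of_isCoatom {K M N : Subgroup Q} [N.Normal] (hM : IsCoatom M) (hNK : N ≤ K)
    (hKMN : K ⊓ M ≤ N) : N ≤ M ∨ K ≤ N := by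
  refine or_iff_not_imp_left.mpr fun hNM x hx => ?_
  have hx' : x ∈ M ⊔ N := (codisjoint_iff.mp (hM.not_le_iff_codisjoint.mp hNM)) ▸ mem_top x
  rw [← SetLike.mem_coe, mul_normal] at hx'
  obtain ⟨m, hm, n, hn, rfl⟩ := hx'
  have hmK : m ∈ K := by simpa using K.mul_mem hx (K.inv_mem (hNK hn))
  exact N.mul_mem (hKMN ⟨hmK, hm⟩) hn

end Subgroup

theorem QuotientGroup.eq_bot_or_eq_map_of_isCoatom {Q : Type*} [Group Q] {K M : Subgroup Q}
    [(K ⊓ M).Normal] (hM : IsCoatom M) (N : Subgroup (Q ⧸ K ⊓ M)) [N.Normal]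
    (hNK : N ≤ K.map (mk' (K ⊓ M))) : N = ⊥ ∨ N = K.map (mk' (K ⊓ M)) := by
  have hNK' : N.comap (mk' (K ⊓ M)) ≤ K := by
    simpa [comap_map_eq, inf_le_left] using comap_mono (f := mk' (K ⊓ M)) hNK
  have hKMN : K ⊓ M ≤ N.comap (mk' (K ⊓ M)) :=
    (ker_mk' (K ⊓ M)).ge.trans ((mk' _).ker_le_comap N)
  rcases le_or_le_of_isCoatom hM hNK' hKMN with h | h
  · left
    rw [← map_comap_eq_self_of_surjective (mk'_surjective _) N, Subgroup.map_eq_bot_iff, ker_mk']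
    exact le_inf hNK' h
  · exact .inr (hNK.antisymm (map_le_iff_le_comap.mpr h))

/-- If a group `G` has a nilpotent subgroup of finite index (i.e. `G` is virtually
nilpotent), then every maximal subgroup of `G` has finite index in `G`. -/
theorem virtually_nilpotent_maximal_subgroup_finiteIndex
    (G : Type*) [Group G] (H : Subgroup G) (hH : H.FiniteIndex)
    (hnil : Group.IsNilpotent ↥H)
    (M : Subgroup G) (hM : IsCoatom M) :
    M.FiniteIndex := by
  set K := H.normalCore
  have : Group.IsNilpotent K := Group.nilpotent_of_mulEquiv (subgroupOfEquivOfLe H.normalCore_le)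
  have : (K ⊓ M).Normal := normal_inf_of_isCoatom Group.normalizerCondition_of_isNilpotent hM
  set π := QuotientGroup.mk' (K ⊓ M)
  set A := K.map π
  have : A.Normal := (normalCore_normal H).map π (QuotientGroup.mk'_surjective _)
  have : A.FiniteIndex := ⟨ne_zero_of_dvd_ne_zero FiniteIndex.index_ne_zero
    (K.index_map_dvd (QuotientGroup.mk'_surjective _))⟩
  have : Group.IsNilpotent A := Group.nilpotent_of_surjective _ (π.subgroupMap_surjective K)
  have hA := QuotientGroup.eq_bot_or_eq_map_of_isCoatom (K := K) hM
  have := isMulCommutative_of_minimal_normal hA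
  have : Finite A := finite_of_minimal_normal_of_isMulCommutative hA
  have : Finite (G ⧸ K ⊓ M) := (finite_iff_finite_and_finiteIndex A).mpr ⟨‹_›, ‹_›⟩
  have : (K ⊓ M).FiniteIndex := finiteIndex_of_finite_quotient
  exact finiteIndex_of_le (inf_le_right : K ⊓ M ≤ M)
end

section
/- Let p be a prime, let i, i₁, i₂ be elements of F_p with i ≠ 0 and i₁ ≠ i₂, and let k be an integer with 1 < k < p - 1. For v ∈ F_p set I_v = {v - d·i : d an integer with 0 ≤ d ≤ k - 1} ⊆ F_p. If there exist v₁, v₂ ∈ F_p such that for every v ∈ F_p one has |I_v ∩ {i₁, i₂}| = 1 if and only if v ∈ {v₁, v₂}, then i₂ = i₁ + i or i₂ = i₁ - i. -/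
/-!
Put `t = (i₂ - i₁) / i`, `A = {0, …, k-1} ⊆ F_p` and `v = i₁ + u·i`. Then `i₁ ∈ I_v` iff `u ∈ A`
and `i₂ ∈ I_v` iff `u ∈ A + t`, so the `v` with `|I_v ∩ {i₁, i₂}| = 1` correspond to the points
of `A ∆ (A + t)`. If `t ∉ {0, 1, -1}`, its representative `m` lies in `[2, p-2]`, and the
integers `j` with `k + m - p ≤ j < min k m` (at least two of them, as `2 ≤ k ≤ p - 2`) lie in
`A \ (A + t)`. Since `|A| = |A + t|`, the other half of the symmetric difference is as large,
so there are at least four such `v`, not two.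
-/

open Finset

theorem Finset.card_inter_pair_eq_one_iff {α : Type*} [DecidableEq α] (s : Finset α) {a b : α}
    (hab : a ≠ b) : #(s ∩ {a, b}) = 1 ↔ Xor (a ∈ s) (b ∈ s) := by
  rw [inter_comm, ← filter_mem_eq_inter]
  by_cases ha : a ∈ s <;> by_cases hb : b ∈ s <;>
    simp [filter_insert, filter_singleton, ha, hb, xor_def, hab]

theorem Finset.mem_image_add_right_iff {G : Type*} [AddGroup G] [DecidableEq G] {s : Finset G}
    {t y : G} : y ∈ s.image (· + t) ↔ y - t ∈ s := by
  simp [sub_eq_add_neg]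

theorem mem_image_range_sub_mul_iff {K : Type*} [Field K] [DecidableEq K] {v i j : K}
    (hi : i ≠ 0) (k : ℕ) :
    j ∈ (range k).image (fun d : ℕ => v - d * i) ↔ (v - j) / i ∈ (range k).image Nat.cast := by
  simp only [mem_image]
  refine exists_congr fun d => and_congr_right fun _ => ?_
  rw [eq_div_iff hi, eq_sub_iff_add_eq, ← eq_sub_iff_add_eq', eq_comm]

theorem card_image_range_sub_mul_inter_pair_eq_one_iff {K : Type*} [Field K] [DecidableEq K]
    {i i₁ i₂ : K} (hi : i ≠ 0) (h12 : i₁ ≠ i₂) (k : ℕ) (u : K) :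
    #((range k).image (fun d : ℕ => i₁ + u * i - d * i) ∩ {i₁, i₂}) = 1 ↔
      u ∈ symmDiff ((range k).image Nat.cast)
        (((range k).image Nat.cast).image (· + (i₂ - i₁) / i)) := by
  have h₁ : (i₁ + u * i - i₁) / i = u := by field_simp; ring
  have h₂ : (i₁ + u * i - i₂) / i = u - (i₂ - i₁) / i := by field_simp; ring
  rw [card_inter_pair_eq_one_iff _ h12, mem_image_range_sub_mul_iff hi,
    mem_image_range_sub_mul_iff hi, h₁, h₂, ← mem_image_add_right_iff, xor_def, mem_symmDiff]

namespace ZMod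

variable {p k : ℕ} [NeZero p]

theorem mem_image_range_natCast_iff (hkp : k ≤ p) (y : ZMod p) :
    y ∈ (range k).image Nat.cast ↔ y.val < k := by
  simp only [mem_image, mem_range]
  constructor
  · rintro ⟨d, hd, rfl⟩
    rwa [val_natCast_of_lt (hd.trans_le hkp)]
  · exact fun hy => ⟨y.val, hy, natCast_zmod_val y⟩

theorem two_le_val_and_val_add_two_le {t : ZMod p} (h0 : t ≠ 0) (h1 : t ≠ 1) (h2 : t ≠ -1) :
    2 ≤ t.val ∧ t.val + 2 ≤ p := by
  have hval0 : t.val ≠ 0 := (val_eq_zero t).not.mpr h0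
  have hval1 : t.val ≠ 1 := fun h => h1 (by rw [← natCast_zmod_val t, h, Nat.cast_one])
  have hvalp : t.val ≠ p - 1 := fun h => h2 (by
    rw [← natCast_zmod_val t, h, Nat.cast_sub NeZero.one_le, natCast_self, Nat.cast_one,
      zero_sub])
  have := val_lt t
  omega

theorem natCast_mem_sdiff_image_add (hkp : k ≤ p) {t : ZMod p} {j : ℕ} (hjk : j < k)
    (hjt : j < t.val) (hjp : k + t.val ≤ p + j) :
    (j : ZMod p) ∈ (range k).image Nat.cast \ ((range k).image Nat.cast).image (· + t) := by
  have hval : ((j : ZMod p) - t).val = j + p - t.val := by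
    rw [← val_natCast_of_lt (by omega : j + p - t.val < p), Nat.cast_sub (by omega),
      Nat.cast_add, natCast_self, add_zero, natCast_zmod_val]
  rw [mem_sdiff, mem_image_add_right_iff, mem_image_range_natCast_iff hkp,
    mem_image_range_natCast_iff hkp, hval, val_natCast_of_lt (by omega)]
  omega

theorem two_le_card_sdiff_image_add (hk : 2 ≤ k) (hkp : k + 2 ≤ p) {t : ZMod p}
    (ht : 2 ≤ t.val) (htp : t.val + 2 ≤ p) :
    2 ≤ #((range k).image Nat.cast \ ((range k).image Nat.cast).image (· + t)) := by
  have hsub : (Ico (k + t.val - p) (min k t.val)).image (Nat.cast : ℕ → ZMod p) ⊆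
      (range k).image Nat.cast \ ((range k).image Nat.cast).image (· + t) := by
    intro x hx
    obtain ⟨j, hj, rfl⟩ := mem_image.mp hx
    rw [mem_Ico, lt_min_iff] at hj
    exact natCast_mem_sdiff_image_add (by omega) hj.2.1 hj.2.2 (by omega)
  have hinj : Set.InjOn (Nat.cast : ℕ → ZMod p) (Ico (k + t.val - p) (min k t.val)) := by
    intro a ha b hb hab
    have ha' := (mem_Ico.mp ha).2
    have hb' := (mem_Ico.mp hb).2
    simpa [val_natCast_of_lt (by omega : a < p), val_natCast_of_lt (by omega : b < p)]
      using congrArg val hab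
  calc 2 ≤ #(Ico (k + t.val - p) (min k t.val)) := by rw [Nat.card_Ico]; omega
    _ = _ := (card_image_of_injOn hinj).symm
    _ ≤ _ := card_le_card hsub

theorem four_le_card_symmDiff_image_add (hk : 2 ≤ k) (hkp : k + 2 ≤ p) {t : ZMod p}
    (h0 : t ≠ 0) (h1 : t ≠ 1) (h2 : t ≠ -1) :
    4 ≤ #(symmDiff ((range k).image Nat.cast) (((range k).image Nat.cast).image (· + t))) := by
  obtain ⟨ht, htp⟩ := two_le_val_and_val_add_two_le h0 h1 h2
  have hhalf := two_le_card_sdiff_image_add hk hkp ht htp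
  have hcard : #(((range k).image Nat.cast).image (· + t)) =
      #((range k).image (Nat.cast : ℕ → ZMod p)) :=
    card_image_of_injective _ (add_left_injective t)
  rw [symmDiff_def, sup_eq_union, card_union_of_disjoint disjoint_sdiff_sdiff,
    ← card_sdiff_comm hcard.symm]
  omega

end ZMod

/-- **Lemma 5.5.** Let `i, k, i₁, i₂ ∈ F_p` with `i ≠ 0`, `i₁ ≠ i₂` and `1 < k < p-1`,
and for `v ∈ F_p` let `I_v = {v - d·i ∣ 0 ≤ d ≤ k-1}`. If there are `v₁, v₂ ∈ F_p`
such that `|I_v ∩ {i₁, i₂}| = 1` exactly when `v ∈ {v₁, v₂}`, then `i₂ = i₁ + i` or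
`i₂ = i₁ - i`. -/
theorem interval_intersection_lemma
    (p : ℕ) (hp : p.Prime) (i i₁ i₂ : ZMod p) (hi : i ≠ 0) (h12 : i₁ ≠ i₂)
    (k : ℕ) (hk1 : 1 < k) (hk2 : k < p - 1) (v₁ v₂ : ZMod p)
    (hcond : ∀ v : ZMod p,
      (((Finset.range k).image fun d : ℕ => v - (d : ZMod p) * i) ∩ {i₁, i₂}).card = 1
        ↔ v = v₁ ∨ v = v₂) :
    i₂ = i₁ + i ∨ i₂ = i₁ - i := by
  have : Fact p.Prime := ⟨hp⟩
  set t := (i₂ - i₁) / i with ht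
  set S : Finset (ZMod p) :=
    symmDiff ((range k).image Nat.cast) (((range k).image Nat.cast).image (· + t))
  have hS : S.image (fun u => i₁ + u * i) ⊆ {v₁, v₂} := by
    intro v hv
    obtain ⟨u, hu, rfl⟩ := mem_image.mp hv
    rw [mem_insert, mem_singleton, ← hcond,
      card_image_range_sub_mul_inter_pair_eq_one_iff hi h12 k u]
    exact hu
  have hcard : #S ≤ 2 := by
    rw [← card_image_of_injective _ fun a b hab => mul_right_cancel₀ hi (add_left_cancel hab)]
    exact (card_le_card hS).trans card_le_two
  by_contra hne
  have h0 : t ≠ 0 := div_ne_zero (sub_ne_zero.mpr h12.symm) hi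
  have h1 : t ≠ 1 := fun h => hne (Or.inl (by rw [ht, div_eq_one_iff_eq hi] at h; rw [← h]; ring))
  have h2 : t ≠ -1 := fun h => hne (Or.inr (by rw [ht, div_eq_iff hi] at h; linear_combination h))
  exact absurd ((ZMod.four_le_card_symmDiff_image_add (by omega) (by omega) h0 h1 h2).trans hcard)
    (by norm_num)
end

section
/- Let p be an odd prime and let A be the (p-1)×(p-1) integer matrix with entry A(i,j) = -1 whenever j = p-1, A(i,j) = 1 whenever j ≤ p-2 and i = j+1, and A(i,j) = 0 otherwise. Then A^p is the identity matrix, so A induces an action of the cyclic group ℤ/pℤ on ℤ^{p-1} by automorphisms, and the resulting semidirect product (ℤ/pℤ) ⋉ ℤ^{p-1} has infinitely many distinct maximal subgroups. -/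
/-!
For every prime `q ≡ 1 [MOD p]` the field `ZMod q` contains a primitive `p`-th root of unity `ζ`,
and `χ v = ∑ ζ ^ i * v i` satisfies `χ (A v) = ζ * χ v`, because `(ζ ^ i)ᵢ` is a left eigenvector
of the companion matrix `A`. Hence `(v, k) ↦ (x ↦ χ v + ζ ^ k * x)` is a transitive action of
the semidirect product on `ZMod q`; a transitive action on a set of prime size is primitive, so
the stabilizer of `0` is a maximal subgroup, of index `q`. Dirichlet's theorem provides infinitely
many such `q`, and subgroups of different index are different.

The same eigenvector identity over `ℤ[θ] = ℤ[X] ⧸ (1 + X + ⋯ + X ^ (p - 1))`, where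
`1, θ, …, θ ^ (p - 2)` is a `ℤ`-basis and `θ ^ p = 1`, gives `A ^ p = 1`.
-/

/-- The companion matrix of `1 + x + ⋯ + x^{p-1}`: the last column is constantly `-1`,
the subdiagonal entries are `1`, and all other entries are `0`. (Indices are
`0`-based: column `p-2` is the last column.) -/
def Amat (p : ℕ) : Matrix (Fin (p - 1)) (Fin (p - 1)) ℤ :=
  Matrix.of fun i j =>
    if (j : ℕ) = p - 2 then -1 else if (i : ℕ) = (j : ℕ) + 1 then 1 else 0

open Matrix Multiplicative

theorem Module.Basis.vecMul_map_algebraMap_injective {ι κ S R : Type*} [Fintype ι] [CommRing S]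
    [CommRing R] [Algebra S R] (b : Module.Basis ι S R) :
    Function.Injective fun M : Matrix ι κ S => ⇑b ᵥ* M.map (algebraMap S R) := by
  intro M N h
  ext i j
  have hj : b.equivFun.symm (fun i => M i j) = b.equivFun.symm (fun i => N i j) := by
    simpa [vecMul, dotProduct, b.equivFun_symm_apply, Algebra.smul_def, mul_comm] using
      congrFun h j
  exact congrFun (b.equivFun.symm.injective hj) i

open Polynomial in
theorem Polynomial.natDegree_geom_sum_X {R : Type*} [Ring R] [IsDomain R] {n : ℕ} (hn : n ≠ 0) :
    (∑ i ∈ Finset.range n, (X : R[X]) ^ i).natDegree = n - 1 := by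
  have h := congrArg natDegree (geom_sum_mul (X : R[X]) n)
  rw [← C_1, natDegree_mul (monic_geom_sum_X hn).ne_zero (X_sub_C_ne_zero 1), natDegree_X_sub_C,
    natDegree_X_pow_sub_C] at h
  omega

theorem ZMod.exists_monoidHom_ofAdd_one_eq {G : Type*} [Group G] {n : ℕ} {g : G}
    (hg : g ^ n = 1) : ∃ c : Multiplicative (ZMod n) →* G, c (ofAdd 1) = g :=
  ⟨AddMonoidHom.toMultiplicativeLeft
      (ZMod.lift n ⟨zmultiplesHom _ (Additive.ofMul g), by simp [← ofMul_pow, hg]⟩),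
    by simpa using
      congrArg Additive.toMul (ZMod.lift_coe n ⟨zmultiplesHom _ (Additive.ofMul g), _⟩ 1)⟩

theorem ZMod.ofAdd_one_pow_val {n : ℕ} [NeZero n] (k : Multiplicative (ZMod n)) :
    ofAdd (1 : ZMod n) ^ (toAdd k).val = k := by
  simp [← ofAdd_nsmul]

section AffineAction

variable {V K F : Type*} [AddCommGroup V] [Group K] [Ring F]
  {φ : K →* MulAut (Multiplicative V)} {χ : V →+ F} {c : K →* Fˣ}

theorem map_toAdd_pow_apply_eq_mul {k : K} (hk : ∀ x, χ (toAdd (φ k x)) = c k * χ (toAdd x))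
    (n : ℕ) (x : Multiplicative V) : χ (toAdd (φ (k ^ n) x)) = c (k ^ n) * χ (toAdd x) := by
  induction n generalizing x with
  | zero => simp
  | succ n ih =>
    rw [pow_succ, map_mul, MulAut.mul_apply, ih, hk, map_mul, Units.val_mul, mul_assoc]

variable (χ c) in
abbrev affineAction (hχ : ∀ k x, χ (toAdd (φ k x)) = c k * χ (toAdd x)) :
    MulAction (Multiplicative V ⋊[φ] K) F where
  smul g x := χ (toAdd g.left) + c g.right * x
  one_smul x := show χ (toAdd 1) + c 1 * x = x by simp
  mul_smul g h x := show χ (toAdd (g * h).left) + c (g * h).right * x =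
      χ (toAdd g.left) + c g.right * (χ (toAdd h.left) + c h.right * x) by
    simp [hχ, mul_add, mul_assoc, add_assoc]

theorem exists_isCoatom_index_eq_card (hχ : ∀ k x, χ (toAdd (φ k x)) = c k * χ (toAdd x))
    (hsurj : Function.Surjective χ) (hF : (Nat.card F).Prime) :
    ∃ M : Subgroup (Multiplicative V ⋊[φ] K), IsCoatom M ∧ M.index = Nat.card F := by
  let := affineAction χ c hχ
  have : MulAction.IsPretransitive (Multiplicative V ⋊[φ] K) F := ⟨fun x y => by
    obtain ⟨v, hv⟩ := hsurj (y - x)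
    exact ⟨⟨ofAdd v, 1⟩, show χ v + c 1 * x = y by simp [hv]⟩⟩
  have : Finite F := Nat.finite_of_card_ne_zero hF.ne_zero
  have : Nontrivial F := Finite.one_lt_card_iff_nontrivial.mp hF.one_lt
  have := MulAction.IsPreprimitive.of_prime_card (G := Multiplicative V ⋊[φ] K) hF
  exact ⟨_, MulAction.IsPreprimitive.isCoatom_stabilizer_of_isPreprimitive _ 0,
    MulAction.index_stabilizer_of_transitive _ _⟩

end AffineAction

section CompanionMatrix

variable {R : Type*} [CommRing R] {p : ℕ} {ζ : R}

theorem vecMul_map_Amat (hζ : ∑ i ∈ Finset.range p, ζ ^ i = 0) :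
    (fun i : Fin (p - 1) => ζ ^ (i : ℕ)) ᵥ* (Amat p).map (Int.castRingHom R) =
      ζ • fun i : Fin (p - 1) => ζ ^ (i : ℕ) := by
  ext j
  simp only [vecMul, dotProduct, map_apply, Amat, of_apply, Pi.smul_apply, smul_eq_mul,
    ← pow_succ']
  split_ifs with hj
  · rw [show p = (j : ℕ) + 1 + 1 by omega, Finset.sum_range_succ] at hζ
    rw [Fin.sum_univ_eq_sum_range (fun i => ζ ^ i * Int.castRingHom R (-1))]
    rw [show (j : ℕ) + 1 = p - 1 by omega] at hζ ⊢
    simp only [map_neg, map_one, mul_neg_one, Finset.sum_neg_distrib]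
    linear_combination -hζ
  · rw [Fintype.sum_eq_single ⟨(j : ℕ) + 1, by omega⟩]
    · simp
    · intro i hi
      simp only [ne_eq, Fin.ext_iff] at hi
      simp [hi]

theorem vecMul_map_Amat_pow (hζ : ∑ i ∈ Finset.range p, ζ ^ i = 0) (n : ℕ) :
    (fun i : Fin (p - 1) => ζ ^ (i : ℕ)) ᵥ* (Amat p ^ n).map (Int.castRingHom R) =
      ζ ^ n • fun i : Fin (p - 1) => ζ ^ (i : ℕ) := by
  induction n with
  | zero => simp
  | succ n ih =>
    rw [pow_succ, Matrix.map_mul, ← vecMul_vecMul, ih, smul_vecMul, vecMul_map_Amat hζ, smul_smul,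
      pow_succ]

end CompanionMatrix

open Polynomial in
theorem Amat_pow_eq_one (p : ℕ) : Amat p ^ p = 1 := by
  rcases lt_or_ge p 2 with hp | hp
  · ext i
    exact absurd i.2 (by omega)
  set f : ℤ[X] := ∑ i ∈ Finset.range p, X ^ i
  have hf : f.Monic := monic_geom_sum_X (by omega)
  let b := (AdjoinRoot.powerBasis' hf).basis.reindex (finCongr (natDegree_geom_sum_X (by omega)))
  have hb : ⇑b = fun i : Fin (p - 1) => AdjoinRoot.root f ^ (i : ℕ) := by
    ext i
    simp only [b, Module.Basis.coe_reindex, PowerBasis.coe_basis, AdjoinRoot.powerBasis'_gen,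
      Function.comp_apply]
    rfl
  have hsum : ∑ i ∈ Finset.range p, AdjoinRoot.root f ^ i = 0 := by
    simpa [f, ← AdjoinRoot.aeval_eq] using AdjoinRoot.mk_self (f := f)
  have hroot : AdjoinRoot.root f ^ p = 1 := by
    rw [← sub_eq_zero, ← geom_sum_mul, hsum, zero_mul]
  apply b.vecMul_map_algebraMap_injective
  simp only [RingHom.ext_int (algebraMap ℤ (AdjoinRoot f)) (Int.castRingHom _), hb,
    vecMul_map_Amat_pow hsum, hroot, one_smul]
  simp

section EvalCoeffs

variable {R : Type*} [CommRing R]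

variable (R) in
def evalCoeffs (m : ℕ) (ζ : R) : (Fin m → ℤ) →+ R where
  toFun v := ∑ i : Fin m, ζ ^ (i : ℕ) * v i
  map_zero' := by simp
  map_add' v w := by simp [mul_add, Finset.sum_add_distrib]

theorem evalCoeffs_Amat_mulVec {p : ℕ} {ζ : R} (hζ : ∑ i ∈ Finset.range p, ζ ^ i = 0)
    (v : Fin (p - 1) → ℤ) :
    evalCoeffs R (p - 1) ζ (Amat p *ᵥ v) = ζ * evalCoeffs R (p - 1) ζ v := by
  change (fun i : Fin (p - 1) => ζ ^ (i : ℕ)) ⬝ᵥ (Int.castRingHom R ∘ (Amat p *ᵥ v)) =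
    ζ * (fun i : Fin (p - 1) => ζ ^ (i : ℕ)) ⬝ᵥ (Int.castRingHom R ∘ v)
  rw [show Int.castRingHom R ∘ (Amat p *ᵥ v) =
      (Amat p).map (Int.castRingHom R) *ᵥ (Int.castRingHom R ∘ v) from
      funext (RingHom.map_mulVec _ _ _),
    dotProduct_mulVec, vecMul_map_Amat hζ, smul_dotProduct, smul_eq_mul]

theorem evalCoeffs_surjective {m : ℕ} (hm : m ≠ 0) (ζ : R)
    (hR : Function.Surjective (Int.cast : ℤ → R)) : Function.Surjective (evalCoeffs R m ζ) := by
  intro x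
  obtain ⟨n, rfl⟩ := hR x
  exact ⟨Pi.single ⟨0, by omega⟩ n,
    by simp [evalCoeffs, Pi.single_apply, apply_ite (Int.cast : ℤ → R)]⟩

end EvalCoeffs

theorem exists_isCoatom_index_eq_of_modEq_one {p q : ℕ} (hp : p.Prime) (hq : q.Prime)
    (hqp : q ≡ 1 [MOD p])
    (φ : Multiplicative (ZMod p) →* MulAut (Multiplicative (Fin (p - 1) → ℤ)))
    (hφ : ∀ v, φ (ofAdd 1) (ofAdd v) = ofAdd (Amat p *ᵥ v)) :
    ∃ M : Subgroup (Multiplicative (Fin (p - 1) → ℤ) ⋊[φ] Multiplicative (ZMod p)),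
      IsCoatom M ∧ M.index = q := by
  have := Fact.mk hp
  have := Fact.mk hq
  obtain ⟨u, hu⟩ : ∃ u : (ZMod q)ˣ, orderOf u = p := exists_prime_orderOf_dvd_card p <| by
    rw [ZMod.card_units]
    exact (Nat.modEq_iff_dvd' hq.one_le).mp hqp.symm
  have hζ : IsPrimitiveRoot (u : ZMod q) p := IsPrimitiveRoot.coe_units_iff.mpr (hu ▸ .orderOf u)
  obtain ⟨c, hc⟩ := ZMod.exists_monoidHom_ofAdd_one_eq (hu ▸ pow_orderOf_eq_one u)
  set χ := evalCoeffs (ZMod q) (p - 1) (u : ZMod q)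
  have hgen : ∀ x, χ (toAdd (φ (ofAdd 1) x)) = c (ofAdd 1) * χ (toAdd x) := fun x => by
    rw [← ofAdd_toAdd x, hφ, toAdd_ofAdd, toAdd_ofAdd, hc,
      evalCoeffs_Amat_mulVec (hζ.geom_sum_eq_zero hp.one_lt)]
  have hχ : ∀ k x, χ (toAdd (φ k x)) = c k * χ (toAdd x) := fun k => by
    rw [← ZMod.ofAdd_one_pow_val k]
    exact map_toAdd_pow_apply_eq_mul hgen _
  simpa using exists_isCoatom_index_eq_card hχ
    (evalCoeffs_surjective (by have := hp.two_le; omega) _ ZMod.intCast_surjective)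
    (by simpa using hq)

theorem semidirect_product_infinitely_many_maximal_subgroups_general
    (p : ℕ) (hp : p.Prime) :
    Amat p ^ p = 1 ∧
    ∀ (φ : Multiplicative (ZMod p) →* MulAut (Multiplicative (Fin (p - 1) → ℤ))),
      (∀ v : Fin (p - 1) → ℤ,
        φ (Multiplicative.ofAdd (1 : ZMod p)) (Multiplicative.ofAdd v)
          = Multiplicative.ofAdd ((Amat p).mulVec v)) →
      {M : Subgroup (SemidirectProduct (Multiplicative (Fin (p - 1) → ℤ))
          (Multiplicative (ZMod p)) φ) | IsCoatom M}.Infinite := by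
  refine ⟨Amat_pow_eq_one p, fun φ hφ => ?_⟩
  refine .of_image Subgroup.index <|
    (Nat.infinite_setOfPred_prime_modEq_one hp.ne_zero).mono ?_
  rintro q ⟨hq, hqp⟩
  obtain ⟨M, hM, hMq⟩ := exists_isCoatom_index_eq_of_modEq_one hp hq hqp φ hφ
  exact ⟨M, hM, hMq⟩

/-- For `p` an odd prime, `A^p = 1`, so `A` induces an action of `ℤ/pℤ` on `ℤ^{p-1}`
by automorphisms, and the resulting semidirect product `(ℤ/pℤ) ⋉ ℤ^{p-1}` has
infinitely many distinct maximal subgroups. -/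
theorem semidirect_product_infinitely_many_maximal_subgroups
    (p : ℕ) (hp : p.Prime) (hodd : Odd p) :
    Amat p ^ p = 1 ∧
    ∀ (φ : Multiplicative (ZMod p) →* MulAut (Multiplicative (Fin (p - 1) → ℤ))),
      (∀ v : Fin (p - 1) → ℤ,
        φ (Multiplicative.ofAdd (1 : ZMod p)) (Multiplicative.ofAdd v)
          = Multiplicative.ofAdd ((Amat p).mulVec v)) →
      {M : Subgroup (SemidirectProduct (Multiplicative (Fin (p - 1) → ℤ))
          (Multiplicative (ZMod p)) φ) | IsCoatom M}.Infinite :=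
  semidirect_product_infinitely_many_maximal_subgroups_general p hp
end
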